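/- Let A be a complex Banach algebra with identity and let a, b ∈ A be Hirano invertible. If aba = 0 and ab² = 0, then a + b is Hirano invertible. -/

import Mathlib

/-!
An element `a` is Hirano invertible iff `a - a ^ 3` is nilpotent. Forwards, `e = a x` is an
idempotent commuting with `a`, and `a - a ^ 3 = a (1 - e) - a (a ^ 2 - e)` where
`(a (1 - e)) ^ 2 = (a ^ 2 - e) (1 - e)`. Backwards, inside the commutative subring generated by
`a` the idempotent `a ^ 2` modulo the nilradical lifts to an idempotent `e`, and
`x = a (1 + a ^ 2 - e)⁻¹ e` works.

For the sum `s = a + b`, the hypotheses say that `c = a b` annihilates `a` and `b` from the left.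
Then `s - s ^ 3 = X + Y` with `X = (a - a ^ 3) - a c` and `Y = b (1 - s ^ 2)`; both are nilpotent
(up to moving `b` to the right of `1 - s ^ 2` in `Y`), and `X Y = (1 - a ^ 2) c`, so
`X Y X = X Y Y = 0`, which is enough for `X + Y` to be nilpotent.
-/

/-- An element of a ring is *Hirano invertible* if there exists `x` with
`a * x = x * a`, `x = x * a * x`, and `a ^ 2 - a * x` nilpotent. -/
def IsHirano {R : Type*} [Ring R] (a : R) : Prop :=
  ∃ x : R, a * x = x * a ∧ x = x * a * x ∧ IsNilpotent (a ^ 2 - a * x)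

section Nilpotent

variable {R : Type*} [Ring R] {x y : R}

theorem IsNilpotent.mul_comm (h : IsNilpotent (x * y)) : IsNilpotent (y * x) := by
  obtain ⟨n, hn⟩ := h
  have hconj : SemiconjBy y (x * y) (y * x) := (mul_assoc y x y).symm
  exact ⟨n + 1, by
    rw [_root_.pow_succ, ← mul_assoc, ← (hconj.pow_right n).eq, hn, mul_zero, zero_mul]⟩

theorem isNilpotent_add_of_mul_eq_zero (hxy : x * y = 0) (hx : IsNilpotent x)
    (hy : IsNilpotent y) : IsNilpotent (x + y) := by
  obtain ⟨p, hp⟩ := hx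
  obtain ⟨q, hq⟩ := hy
  have hx_left : SemiconjBy x (x + y) x := by
    rw [SemiconjBy, mul_add, hxy, add_zero]
  have hy_right : SemiconjBy y y (x + y) := by
    rw [SemiconjBy, add_mul, hxy, zero_add]
  -- `x` kills `(x + y) ^ p` from the left, and `(x + y) ^ q * y = y ^ (q + 1)`
  refine ⟨q + 1 + p, ?_⟩
  rw [pow_add, pow_succ, mul_assoc, add_mul, (hx_left.pow_right p).eq, hp, zero_mul, zero_add,
    ← mul_assoc, ← (hy_right.pow_right q).eq, hq, mul_zero, zero_mul]

theorem isNilpotent_add_of_mul_mul_eq_zero (hx : IsNilpotent x) (hy : IsNilpotent y)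
    (hxyx : x * y * x = 0) (hxyy : x * y * y = 0) : IsNilpotent (x + y) := by
  have hxy : IsNilpotent (x * y) := ⟨2, by rw [sq, ← mul_assoc, hxyx, zero_mul]⟩
  have hxs : IsNilpotent (x * (x + y)) := by
    rw [mul_add, add_comm, ← sq]
    exact isNilpotent_add_of_mul_eq_zero (by rw [sq, ← mul_assoc, hxyx, zero_mul]) hxy
      (hx.pow_of_pos two_ne_zero)
  have hys : IsNilpotent (y * (x + y)) := by
    refine IsNilpotent.mul_comm ?_
    rw [add_mul, ← sq]
    exact isNilpotent_add_of_mul_eq_zero (by rw [sq, ← mul_assoc, hxyy, zero_mul]) hxy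
      (hy.pow_of_pos two_ne_zero)
  refine IsNilpotent.of_pow (m := 2) ?_
  rw [sq, add_mul]
  refine isNilpotent_add_of_mul_eq_zero ?_ hxs hys
  linear_combination (norm := noncomm_ring) x * hxyx + x * hxyy + hxyy * (x + y)

theorem isNilpotent_sub_mul_of_mul_eq_zero {w t c : R} (hw : IsNilpotent w) (hct : c * t = 0)
    (hcw : c * w = 0) : IsNilpotent (w - t * c) := by
  rw [sub_eq_neg_add]
  refine isNilpotent_add_of_mul_eq_zero (by rw [neg_mul, mul_assoc, hcw, mul_zero, neg_zero])
    (IsNilpotent.neg ⟨2, by rw [sq, mul_assoc, ← mul_assoc c, hct, zero_mul, mul_zero]⟩) hw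

theorem isNilpotent_add_sub_add_pow_three_of_mul_mul_eq_zero {a b : R}
    (ha : IsNilpotent (a - a ^ 3)) (hb : IsNilpotent (b - b ^ 3))
    (h1 : a * b * a = 0) (h2 : a * b * b = 0) : IsNilpotent (a + b - (a + b) ^ 3) := by
  have hX : IsNilpotent ((a - a ^ 3) - a * (a * b)) :=
    isNilpotent_sub_mul_of_mul_eq_zero ha h1
      (by linear_combination (norm := noncomm_ring) h1 * (1 - a ^ 2))
  have hY : IsNilpotent (b * (1 - (a + b) ^ 2)) := by
    refine IsNilpotent.mul_comm ?_
    rw [show (1 - (a + b) ^ 2) * b = (b - b ^ 3) - (a + b) * (a * b) by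
      linear_combination (norm := noncomm_ring) -h2]
    exact isNilpotent_sub_mul_of_mul_eq_zero hb
      (by linear_combination (norm := noncomm_ring) h1 + h2)
      (by linear_combination (norm := noncomm_ring) h2 * (1 - b ^ 2))
  have hXY : ((a - a ^ 3) - a * (a * b)) * (b * (1 - (a + b) ^ 2)) = (1 - a ^ 2) * (a * b) := by
    linear_combination (norm := noncomm_ring)
      -(1 - a ^ 2) * (h1 + h2) * (a + b) - a * h2 * (1 - (a + b) ^ 2)
  rw [show a + b - (a + b) ^ 3 = ((a - a ^ 3) - a * (a * b)) + b * (1 - (a + b) ^ 2) by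
    linear_combination (norm := noncomm_ring) -h1 - h2]
  refine isNilpotent_add_of_mul_mul_eq_zero hX hY ?_ ?_
  · rw [hXY]
    linear_combination (norm := noncomm_ring) (1 - a ^ 2) * h1 * (1 - a ^ 2 - a * b)
  · rw [hXY]
    linear_combination (norm := noncomm_ring) (1 - a ^ 2) * h2 * (1 - (a + b) ^ 2)

end Nilpotent

theorem IsHirano.map {R S F : Type*} [Ring R] [Ring S] [FunLike F R S] [RingHomClass F R S]
    (f : F) {a : R} (h : IsHirano a) : IsHirano (f a) := by
  obtain ⟨x, hax, hxax, hn⟩ := h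
  refine ⟨f x, ?_, ?_, ?_⟩
  · rw [← map_mul, hax, map_mul]
  · rw [← map_mul, ← map_mul, ← hxax]
  · simpa using hn.map f

theorem isHirano_of_isNilpotent_sub_pow_three_of_commRing {R : Type*} [CommRing R] {a : R}
    (h : IsNilpotent (a - a ^ 3)) : IsHirano a := by
  set q := Ideal.Quotient.mk (nilradical R)
  have hker : ∀ y ∈ RingHom.ker q, IsNilpotent y := fun y hy ↦ by
    rwa [Ideal.mk_ker, mem_nilradical] at hy
  have hidem : IsIdempotentElem (q (a ^ 2)) := by
    rw [IsIdempotentElem, ← map_mul, Ideal.Quotient.eq, mem_nilradical,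
      show a ^ 2 * a ^ 2 - a ^ 2 = -a * (a - a ^ 3) by ring]
    exact (Commute.all _ _).isNilpotent_mul_left h
  obtain ⟨e, he, hqe⟩ :=
    exists_isIdempotentElem_eq_of_ker_isNilpotent q hker _ ⟨_, rfl⟩ hidem
  have hn : IsNilpotent (a ^ 2 - e) := hker _ (by rw [RingHom.mem_ker, map_sub, hqe, sub_self])
  -- on the corner `e R`, `a ^ 2` acts as the unit `1 + (a ^ 2 - e)`
  obtain ⟨c, hc⟩ := hn.isUnit_one_add.exists_left_inv
  have hce : a ^ 2 * (c * e) = e := by linear_combination e * hc + c * he.eq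
  refine ⟨a * (c * e), mul_comm _ _, ?_, ?_⟩
  · linear_combination (-(a * (c * e))) * hce - (a * c) * he.eq
  · rwa [← mul_assoc, ← sq, hce]

section Hirano

variable {R : Type*} [Ring R] {a : R}

theorem IsHirano.isNilpotent_sub_pow_three (h : IsHirano a) : IsNilpotent (a - a ^ 3) := by
  obtain ⟨x, hax, hxax, hn⟩ := h
  set e := a * x
  have hae : Commute a e := (Commute.refl a).mul_right hax
  have he : IsIdempotentElem e := by
    rw [IsIdempotentElem, mul_assoc, ← mul_assoc x, ← hxax]
  have haf : Commute a (1 - e) := (Commute.one_right a).sub_right hae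
  have han : Commute a (a ^ 2 - e) := ((Commute.refl a).pow_right 2).sub_right hae
  have hfn : Commute (1 - e) (a ^ 2 - e) :=
    (Commute.one_left _).sub_left ((hae.symm.pow_right 2).sub_right (Commute.refl e))
  have hsq : (a * (1 - e)) ^ 2 = (a ^ 2 - e) * (1 - e) := by
    rw [sq, mul_assoc, ← mul_assoc (1 - e), ← haf.eq, mul_assoc, he.one_sub.eq,
      ← mul_assoc, ← sq, sub_mul, he.mul_one_sub_self, sub_zero]
  have hf : IsNilpotent (a * (1 - e)) :=
    IsNilpotent.of_pow (hsq ▸ hfn.symm.isNilpotent_mul_right hn)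
  have hsplit : a - a ^ 3 = a * (1 - e) - a * (a ^ 2 - e) := by noncomm_ring
  rw [hsplit]
  exact (((Commute.refl a).mul_right han).mul_left (haf.symm.mul_right hfn)).isNilpotent_sub hf
    (han.isNilpotent_mul_left hn)

open scoped IsMulCommutative in
theorem isHirano_of_isNilpotent_sub_pow_three (h : IsNilpotent (a - a ^ 3)) : IsHirano a := by
  let S := Subring.closure {a}
  have : IsMulCommutative S := Subring.isMulCommutative_closure (by rintro x rfl y rfl; rfl)
  let a' : S := ⟨a, Subring.subset_closure rfl⟩
  have h' : IsNilpotent (a' - a' ^ 3) := (IsNilpotent.map_iff S.subtype_injective).mp h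
  exact (isHirano_of_isNilpotent_sub_pow_three_of_commRing h').map S.subtype

theorem isHirano_iff_isNilpotent_sub_pow_three : IsHirano a ↔ IsNilpotent (a - a ^ 3) :=
  ⟨IsHirano.isNilpotent_sub_pow_three, isHirano_of_isNilpotent_sub_pow_three⟩

end Hirano

theorem hirano_add_of_aba_abb_eq_zero_general {A : Type*} [NormedRing A]
    (a b : A) (ha : IsHirano a) (hb : IsHirano b)
    (h1 : a * b * a = 0) (h2 : a * b ^ 2 = 0) :
    IsHirano (a + b) := by
  rw [isHirano_iff_isNilpotent_sub_pow_three] at ha hb ⊢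
  exact isNilpotent_add_sub_add_pow_three_of_mul_mul_eq_zero ha hb h1
    (by rw [mul_assoc, ← sq, h2])

/-- If `a, b` are Hirano invertible, `a * b * a = 0` and `a * b ^ 2 = 0`,
then `a + b` is Hirano invertible. -/
theorem hirano_add_of_aba_abb_eq_zero {A : Type*} [NormedRing A] [NormedAlgebra ℂ A]
    [CompleteSpace A] (a b : A) (ha : IsHirano a) (hb : IsHirano b)
    (h1 : a * b * a = 0) (h2 : a * b ^ 2 = 0) :
    IsHirano (a + b) :=
  hirano_add_of_aba_abb_eq_zero_general a b ha hb h1 h2
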